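/- Let F be a one-sided CA over a finite alphabet A of radius r with r ≥ 1. Then for every n ≥ 1 the subword complexities of the trace subshifts satisfy p_n(τ_{r+1}(F)) = |A| · p_n(τ_r(F)). -/

import Mathlib

/-- The one-sided shift map `σ(c)(i) = c(i+1)`. -/
def shift {A : Type*} (c : ℕ → A) : ℕ → A := fun i => c (i + 1)

/-- The `m`-th trace subshift of `F`: the set of sequences of width-`m` windows
`i ↦ (F^i(c)(0), …, F^i(c)(m-1))` read off orbits of `F`. -/
def traceSubshift {A : Type*} (F : (ℕ → A) → ℕ → A) (m : ℕ) : Set (ℕ → (Fin m → A)) :=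
  { t | ∃ c : ℕ → A, ∀ (i : ℕ) (k : Fin m), t i k = F^[i] c (k : ℕ) }

/-- The set of length-`n` prefixes of elements of `X ⊆ Bᴺ`; its cardinality is the subword
complexity `p_n(X)`. -/
def prefixSet {B : Type*} (X : Set (ℕ → B)) (n : ℕ) : Set (Fin n → B) :=
  { u | ∃ t ∈ X, ∀ i : Fin n, u i = t (i : ℕ) }

/-!
Reading the trace of `c` in width `r + 1` amounts to reading the letter `c 0` together with the
trace of `σ c` in width `r`. Since `F` commutes with `σ`, columns `1, …, r` of the wide trace form
the narrow trace of `σ c`; and column `0` at time `i + 1` is `f` applied to column `0` at time `i`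
and the narrow trace of `σ c` at time `i`, so it is determined by `c 0` and that narrow trace.
As `c ↦ (c 0, σ c)` is a bijection, every pair of a letter and a narrow prefix occurs, and the
length-`n` prefixes of `τ_{r+1}(F)` are in bijection with `A × (length-n prefixes of τ_r(F))`.
-/

variable {A : Type*}

def traceWindow (F : (ℕ → A) → ℕ → A) (m n : ℕ) (c : ℕ → A) : Fin n → Fin m → A :=
  fun i k => F^[i] c k

theorem prefixSet_traceSubshift (F : (ℕ → A) → ℕ → A) (m n : ℕ) :
    prefixSet (traceSubshift F m) n = Set.range (traceWindow F m n) := by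
  ext u
  constructor
  · rintro ⟨t, ⟨c, hc⟩, hu⟩
    exact ⟨c, funext fun i => funext fun k => by rw [hu, hc]; rfl⟩
  · rintro ⟨c, rfl⟩
    exact ⟨fun i k => F^[i] c k, ⟨c, fun _ _ => rfl⟩, fun _ => rfl⟩

theorem range_head_shift {B : Type*} (φ : (ℕ → A) → B) :
    Set.range (fun c => (c 0, φ (shift c))) = Set.univ ×ˢ Set.range φ := by
  ext ⟨a, b⟩
  constructor
  · rintro ⟨c, hc⟩
    exact ⟨trivial, shift c, congrArg Prod.snd hc⟩
  · rintro ⟨-, d, rfl⟩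
    exact ⟨Stream'.cons a d, rfl⟩

section LocalRule

variable {r : ℕ} {f : (Fin (r + 1) → A) → A} {F : (ℕ → A) → ℕ → A}

theorem commute_shift_of_localRule (hF : ∀ c i, F c i = f fun k => c (i + (k : ℕ))) :
    Function.Commute F shift := by
  intro c
  funext i
  simp only [shift, hF, Nat.add_right_comm]

theorem iterate_succ_apply_zero_of_localRule (hF : ∀ c i, F c i = f fun k => c (i + (k : ℕ)))
    (c : ℕ → A) (i : ℕ) :
    F^[i + 1] c 0 = f (Fin.cons (F^[i] c 0) fun k : Fin r => F^[i] (shift c) k) := by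
  rw [Function.iterate_succ_apply', hF, (commute_shift_of_localRule hF).iterate_left i c]
  congr 1
  funext k
  cases k using Fin.cases <;> simp [shift]

theorem iterate_apply_zero_eq_of_shift (hF : ∀ c i, F c i = f fun k => c (i + (k : ℕ)))
    {c c' : ℕ → A} (h₀ : c 0 = c' 0) :
    ∀ i, (∀ j < i, ∀ k < r, F^[j] (shift c) k = F^[j] (shift c') k) →
      F^[i] c 0 = F^[i] c' 0
  | 0, _ => h₀
  | i + 1, h => by
    rw [iterate_succ_apply_zero_of_localRule hF, iterate_succ_apply_zero_of_localRule hF,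
      iterate_apply_zero_eq_of_shift hF h₀ i fun j hj => h j (by omega)]
    congr 2
    funext k
    exact h i i.lt_succ_self k k.isLt

def splitWindow {n : ℕ} (u : Fin (n + 1) → Fin (r + 1) → A) : A × (Fin (n + 1) → Fin r → A) :=
  (u 0 0, fun i => Fin.tail (u i))

theorem splitWindow_traceWindow (hF : ∀ c i, F c i = f fun k => c (i + (k : ℕ)))
    (n : ℕ) (c : ℕ → A) :
    splitWindow (traceWindow F (r + 1) (n + 1) c) = (c 0, traceWindow F r (n + 1) (shift c)) := by
  refine Prod.ext rfl (funext fun i => funext fun k => ?_)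
  simp [splitWindow, traceWindow, Fin.tail, (commute_shift_of_localRule hF).iterate_left i c,
    shift]

theorem injOn_splitWindow (hF : ∀ c i, F c i = f fun k => c (i + (k : ℕ))) (n : ℕ) :
    Set.InjOn splitWindow (Set.range (traceWindow F (r + 1) (n + 1))) := by
  rintro _ ⟨c, rfl⟩ _ ⟨c', rfl⟩ h
  rw [splitWindow_traceWindow hF, splitWindow_traceWindow hF, Prod.mk.injEq] at h
  obtain ⟨h₀, hshift⟩ := h
  have htail : ∀ j < n + 1, ∀ k < r, F^[j] (shift c) k = F^[j] (shift c') k :=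
    fun j hj k hk => congrFun (congrFun hshift ⟨j, hj⟩) ⟨k, hk⟩
  funext i k
  cases k using Fin.cases with
  | zero =>
    exact iterate_apply_zero_eq_of_shift hF h₀ i fun j hj => htail j (hj.trans i.isLt)
  | succ k =>
    simpa [traceWindow, shift, (commute_shift_of_localRule hF).iterate_left i _] using
      htail i i.isLt k k.isLt

theorem card_prefixSet_traceSubshift_succ (hF : ∀ c i, F c i = f fun k => c (i + (k : ℕ)))
    (n : ℕ) :
    Nat.card (prefixSet (traceSubshift F (r + 1)) (n + 1)) =
      Nat.card A * Nat.card (prefixSet (traceSubshift F r) (n + 1)) := by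
  have himage : splitWindow '' Set.range (traceWindow F (r + 1) (n + 1)) =
      Set.univ ×ˢ Set.range (traceWindow F r (n + 1)) := by
    rw [← Set.range_comp, ← range_head_shift]
    exact congrArg Set.range (funext (splitWindow_traceWindow hF n))
  rw [prefixSet_traceSubshift, prefixSet_traceSubshift,
    ← Nat.card_image_of_injOn (injOn_splitWindow hF n), himage,
    Nat.card_congr (Equiv.Set.prod _ _), Nat.card_prod, Nat.card_univ]

end LocalRule

theorem subword_complexity_of_trace_succ_general
    {A : Type} [Fintype A]
    {r : ℕ}
    (f : (Fin (r + 1) → A) → A) (F : (ℕ → A) → ℕ → A)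
    (hF : ∀ c i, F c i = f fun k => c (i + (k : ℕ)))
    (n : ℕ) (hn : 1 ≤ n) :
    Nat.card (prefixSet (traceSubshift F (r + 1)) n) =
      Fintype.card A * Nat.card (prefixSet (traceSubshift F r) n) := by
  obtain ⟨m, rfl⟩ := Nat.exists_eq_add_of_le' hn
  rw [← Nat.card_eq_fintype_card]
  exact card_prefixSet_traceSubshift_succ hF m

/-- For a one-sided CA `F` of radius `r ≥ 1` over a finite alphabet `A`, the subword
complexities of consecutive trace subshifts satisfy
`p_n(τ_{r+1}(F)) = |A| · p_n(τ_r(F))` for every `n ≥ 1`. -/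
theorem subword_complexity_of_trace_succ
    {A : Type} [Fintype A] [Nonempty A]
    {r : ℕ} (hr : 1 ≤ r)
    (f : (Fin (r + 1) → A) → A) (F : (ℕ → A) → ℕ → A)
    (hF : ∀ c i, F c i = f fun k => c (i + (k : ℕ)))
    (n : ℕ) (hn : 1 ≤ n) :
    Nat.card (prefixSet (traceSubshift F (r + 1)) n) =
      Fintype.card A * Nat.card (prefixSet (traceSubshift F r) n) :=
  subword_complexity_of_trace_succ_general f F hF n hn
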